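/- Let Λ be a row-finite k-graph with no sources. For a vertex v define Σ_v = {(p,q) ∈ ℕ^k × ℕ^k : σ^p(x) = σ^q(x) for all x ∈ vΛ^∞}. Then for every morphism λ ∈ Λ, Σ_{r(λ)} ⊆ Σ_{s(λ)}. -/

import Mathlib

/-- A `P`-graph structure on a set `V` of vertices (objects) and a set `E` of paths
(morphisms): a small category with range `r`, source `s`, identities `vert`,
a (partially meaningful) composition `comp`, together with a degree functor `d : E → P`
satisfying the unique factorisation property. -/
structure PGraphStr (P : Type) [AddCommMonoid P] (V : Type) (E : Type) where
  r : E → V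
  s : E → V
  d : E → P
  vert : V → E
  comp : E → E → E
  r_vert : ∀ v, r (vert v) = v
  s_vert : ∀ v, s (vert v) = v
  d_vert : ∀ v, d (vert v) = 0
  r_comp : ∀ μ ν, s μ = r ν → r (comp μ ν) = r μ
  s_comp : ∀ μ ν, s μ = r ν → s (comp μ ν) = s ν
  d_comp : ∀ μ ν, s μ = r ν → d (comp μ ν) = d μ + d ν
  comp_assoc : ∀ μ ν ξ, s μ = r ν → s ν = r ξ →
    comp (comp μ ν) ξ = comp μ (comp ν ξ)
  vert_comp : ∀ μ, comp (vert (r μ)) μ = μ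
  comp_vert : ∀ μ, comp μ (vert (s μ)) = μ
  factor : ∀ ξ p q, d ξ = p + q →
    ∃! ηζ : E × E, s ηζ.1 = r ηζ.2 ∧ d ηζ.1 = p ∧ d ηζ.2 = q ∧ comp ηζ.1 ηζ.2 = ξ

variable {k : ℕ} {V E : Type}

/-- A `k`-graph (an `ℕ^k`-graph) is row-finite with no sources when
`0 < |vΛ^n| < ∞` for every vertex `v` and degree `n`. -/
def RowFiniteNoSources (Λ : PGraphStr (Fin k → ℕ) V E) : Prop :=
  ∀ (v : V) (n : Fin k → ℕ),
    {e : E | Λ.r e = v ∧ Λ.d e = n}.Finite ∧ {e : E | Λ.r e = v ∧ Λ.d e = n}.Nonempty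

/-- An infinite path in a `k`-graph `Λ`: a degree-preserving functor `Ω_{ℕ^k} → Λ`,
recorded by its segments `x(m,n)` for `m ≤ n`. -/
structure InfPath (Λ : PGraphStr (Fin k → ℕ) V E) where
  seg : ∀ m n : Fin k → ℕ, m ≤ n → E
  d_seg : ∀ m n (h : m ≤ n), Λ.d (seg m n h) = n - m
  src : ∀ m n p (h₁ : m ≤ n) (h₂ : n ≤ p), Λ.s (seg m n h₁) = Λ.r (seg n p h₂)
  seg_self : ∀ m, seg m m le_rfl = Λ.vert (Λ.r (seg m m le_rfl))
  comp_seg : ∀ m n p (h₁ : m ≤ n) (h₂ : n ≤ p),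
    Λ.comp (seg m n h₁) (seg n p h₂) = seg m p (h₁.trans h₂)

/-- The range `x(0)` of an infinite path. -/
def InfPath.range {Λ : PGraphStr (Fin k → ℕ) V E} (x : InfPath Λ) : V :=
  Λ.r (x.seg 0 0 le_rfl)

/-- The shift `σ^p(x)`, with `σ^p(x)(m,n) = x(m+p,n+p)`. -/
def InfPath.shift {Λ : PGraphStr (Fin k → ℕ) V E} (p : Fin k → ℕ) (x : InfPath Λ) :
    InfPath Λ where
  seg m n h := x.seg (m + p) (n + p) (add_le_add h le_rfl)
  d_seg m n h := by
    rw [x.d_seg]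
    funext i
    simp [Nat.add_sub_add_right]
  src m n q h₁ h₂ := x.src _ _ _ _ _
  seg_self m := x.seg_self (m + p)
  comp_seg m n q h₁ h₂ := x.comp_seg _ _ _ _ _

/-- `Extends Λ y μ x` means `y = μx`: `y(0, d(μ)) = μ` and `σ^{d(μ)}(y) = x`. -/
def Extends (Λ : PGraphStr (Fin k → ℕ) V E) (y : InfPath Λ) (μ : E) (x : InfPath Λ) :
    Prop :=
  y.seg 0 (Λ.d μ) zero_le = μ ∧ y.shift (Λ.d μ) = x

/-- The relation `μ ∼ ν`: `s(μ) = s(ν)` and `μx = νx` for every infinite path `x`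
with range `s(μ)`. -/
def CKeq (Λ : PGraphStr (Fin k → ℕ) V E) (μ ν : E) : Prop :=
  Λ.s μ = Λ.s ν ∧ ∀ x y z : InfPath Λ, x.range = Λ.s μ →
    Extends Λ y μ x → Extends Λ z ν x → y = z

/-- The periodicity set `Per(Λ) = {d(μ) - d(ν) : μ ∼ ν} ⊆ ℤ^k`. -/
def PerSet (Λ : PGraphStr (Fin k → ℕ) V E) : Set (Fin k → ℤ) :=
  {g | ∃ μ ν : E, CKeq Λ μ ν ∧ g = fun i => (Λ.d μ i : ℤ) - (Λ.d ν i : ℤ)}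

/-- A maximal tail in a `k`-graph. -/
def IsMaximalTail (Λ : PGraphStr (Fin k → ℕ) V E) (T : Set V) : Prop :=
  T.Nonempty ∧
  (∀ v₁ ∈ T, ∀ v₂ ∈ T, ∃ w ∈ T,
    (∃ e : E, Λ.r e = v₁ ∧ Λ.s e = w) ∧ ∃ e : E, Λ.r e = v₂ ∧ Λ.s e = w) ∧
  (∀ v ∈ T, ∀ i : Fin k,
    ∃ e : E, Λ.r e = v ∧ Λ.d e = Pi.single i 1 ∧ Λ.s e ∈ T) ∧
  (∀ w ∈ T, ∀ (v : V) (e : E), Λ.r e = v → Λ.s e = w → v ∈ T)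

/-- `Σ_v = {(p,q) : σ^p(x) = σ^q(x) for all x ∈ vΛ^∞}`. -/
def SigmaV (Λ : PGraphStr (Fin k → ℕ) V E) (v : V) :
    Set ((Fin k → ℕ) × (Fin k → ℕ)) :=
  {pq | ∀ x : InfPath Λ, x.range = v → x.shift pq.1 = x.shift pq.2}

/-- `Σ_Λ = ⋃_v Σ_v`. -/
def SigmaL (Λ : PGraphStr (Fin k → ℕ) V E) : Set ((Fin k → ℕ) × (Fin k → ℕ)) :=
  ⋃ v : V, SigmaV Λ v

/-- The hereditary set `H_Per`. -/
def HPer (Λ : PGraphStr (Fin k → ℕ) V E) : Set V :=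
  {v | ∀ lam : E, Λ.r lam = v → ∀ m : Fin k → ℕ,
    (fun i => (Λ.d lam i : ℤ) - (m i : ℤ)) ∈ PerSet Λ →
    ∃ μ : E, Λ.r μ = v ∧ Λ.d μ = m ∧ CKeq Λ lam μ}

/-- The coordinatewise inclusion `ℕ^k →+ ℤ^k`. -/
def intCast (k : ℕ) : (Fin k → ℕ) →+ (Fin k → ℤ) where
  toFun n := fun i => (n i : ℤ)
  map_zero' := by funext i; simp
  map_add' a b := by funext i; simp

/-- The composite `ℕ^k → ℤ^k → ℤ^k/H`. -/
def quotHom (k : ℕ) (H : AddSubgroup (Fin k → ℤ)) :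
    (Fin k → ℕ) →+ (Fin k → ℤ) ⧸ H :=
  (QuotientAddGroup.mk' H).comp (intCast k)

/-- The submonoid `P = f(ℕ^k)` of `ℤ^k/H`. -/
def PMon (k : ℕ) (H : AddSubgroup (Fin k → ℤ)) : AddSubmonoid ((Fin k → ℤ) ⧸ H) :=
  AddMonoidHom.mrange (quotHom k H)

theorem mem_PMon (k : ℕ) (H : AddSubgroup (Fin k → ℤ)) (n : Fin k → ℕ) :
    quotHom k H n ∈ PMon k H :=
  ⟨n, rfl⟩

section Construction

variable (Λ : PGraphStr (Fin k → ℕ) V E)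

/-- The (unique) factorisation of `ξ` at `(p, q)`. -/
noncomputable def PGraphStr.split (ξ : E) (p q : Fin k → ℕ) (h : Λ.d ξ = p + q) :
    E × E :=
  (Λ.factor ξ p q h).choose

lemma PGraphStr.split_spec (ξ : E) (p q : Fin k → ℕ) (h : Λ.d ξ = p + q) :
    Λ.s (Λ.split ξ p q h).1 = Λ.r (Λ.split ξ p q h).2 ∧
      Λ.d (Λ.split ξ p q h).1 = p ∧ Λ.d (Λ.split ξ p q h).2 = q ∧
      Λ.comp (Λ.split ξ p q h).1 (Λ.split ξ p q h).2 = ξ :=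
  (Λ.factor ξ p q h).choose_spec.1

lemma PGraphStr.split_unique (ξ : E) (p q : Fin k → ℕ) (h : Λ.d ξ = p + q)
    {a b : E} (h1 : Λ.s a = Λ.r b) (h2 : Λ.d a = p) (h3 : Λ.d b = q)
    (h4 : Λ.comp a b = ξ) : Λ.split ξ p q h = (a, b) :=
  ((Λ.factor ξ p q h).choose_spec.2 (a, b) ⟨h1, h2, h3, h4⟩).symm

variable {Λ}

lemma InfPath.seg_congr (x : InfPath Λ) {m n m' n' : Fin k → ℕ} (hm : m = m')
    (hn : n = n') (h : m ≤ n) :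
    x.seg m n h = x.seg m' n' (hm ▸ hn ▸ h) := by
  subst hm; subst hn; rfl

lemma InfPath.ext' {x y : InfPath Λ} (h : x.seg = y.seg) : x = y := by
  cases x; cases y; cases h; rfl

lemma InfPath.r_seg (x : InfPath Λ) (n : Fin k → ℕ) (h : 0 ≤ n) :
    Λ.r (x.seg 0 n h) = x.range := by
  rw [← x.comp_seg 0 0 n le_rfl h, Λ.r_comp _ _ (x.src 0 0 n le_rfl h)]
  rfl

lemma InfPath.shift_shift (x : InfPath Λ) (a b : Fin k → ℕ) :
    (x.shift a).shift b = x.shift (b + a) := by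
  apply InfPath.ext'
  funext m n h
  exact x.seg_congr (by funext i; simp [add_assoc]) (by funext i; simp [add_assoc]) _

variable (Λ) (lam : E) (x : InfPath Λ)

/-- `Z n = λ · x(0, n)`. -/
def ZZ (n : Fin k → ℕ) : E := Λ.comp lam (x.seg 0 n zero_le)

variable (hx : x.range = Λ.s lam)

include hx

lemma hsr (n : Fin k → ℕ) (h : 0 ≤ n) :
    Λ.s lam = Λ.r (x.seg 0 n h) := by
  rw [x.r_seg, hx]

lemma dZZ (n : Fin k → ℕ) : Λ.d (ZZ Λ lam x n) = n + Λ.d lam := by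
  rw [ZZ, Λ.d_comp _ _ (hsr Λ lam x hx n _), x.d_seg]
  funext i
  simp only [Pi.add_apply, Pi.sub_apply, Pi.zero_apply]
  omega

lemma sZZ (n : Fin k → ℕ) :
    Λ.s (ZZ Λ lam x n) = Λ.s (x.seg 0 n zero_le) :=
  Λ.s_comp _ _ (hsr Λ lam x hx n _)

/-- `Y n = (λx)(0, n)`: the initial segment of degree `n` of `λ · x`. -/
noncomputable def YY (n : Fin k → ℕ) : E :=
  (Λ.split (ZZ Λ lam x n) n (Λ.d lam) (dZZ Λ lam x hx n)).1

/-- `R n = (λx)(n, n + d(λ))`. -/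
noncomputable def RRR (n : Fin k → ℕ) : E :=
  (Λ.split (ZZ Λ lam x n) n (Λ.d lam) (dZZ Λ lam x hx n)).2

lemma YR_spec (n : Fin k → ℕ) :
    Λ.s (YY Λ lam x hx n) = Λ.r (RRR Λ lam x hx n) ∧
      Λ.d (YY Λ lam x hx n) = n ∧ Λ.d (RRR Λ lam x hx n) = Λ.d lam ∧
      Λ.comp (YY Λ lam x hx n) (RRR Λ lam x hx n) = ZZ Λ lam x n :=
  Λ.split_spec (ZZ Λ lam x n) n (Λ.d lam) (dZZ Λ lam x hx n)

lemma comp_ZZ (m n : Fin k → ℕ) (h : m ≤ n) :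
    Λ.comp (ZZ Λ lam x m) (x.seg m n h) = ZZ Λ lam x n := by
  rw [ZZ, ZZ, Λ.comp_assoc lam _ _ (hsr Λ lam x hx m _) (x.src 0 m n _ h),
    x.comp_seg]

lemma sZZ_r (m n : Fin k → ℕ) (h : m ≤ n) :
    Λ.s (ZZ Λ lam x m) = Λ.r (x.seg m n h) := by
  rw [sZZ Λ lam x hx]
  exact x.src 0 m n _ h

lemma YY_add (n : Fin k → ℕ) : YY Λ lam x hx (n + Λ.d lam) = ZZ Λ lam x n := by
  have hle : n ≤ n + Λ.d lam := le_self_add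
  have u := Λ.split_unique (ZZ Λ lam x (n + Λ.d lam)) (n + Λ.d lam) (Λ.d lam)
    (dZZ Λ lam x hx (n + Λ.d lam)) (sZZ_r Λ lam x hx n _ hle)
    (dZZ Λ lam x hx n)
    (by rw [x.d_seg]; funext i; simp only [Pi.add_apply, Pi.sub_apply]; omega)
    (comp_ZZ Λ lam x hx n _ hle)
  exact congrArg Prod.fst u

lemma dYY' (m n : Fin k → ℕ) (h : m ≤ n) :
    Λ.d (YY Λ lam x hx n) = m + (n - m) := by
  rw [(YR_spec Λ lam x hx n).2.1]
  funext i
  have h2 : m i ≤ n i := h i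
  simp only [Pi.add_apply, Pi.sub_apply]
  omega

/-- The segments of the infinite path `λ · x`. -/
noncomputable def yseg (m n : Fin k → ℕ) (h : m ≤ n) : E :=
  (Λ.split (YY Λ lam x hx n) m (n - m) (dYY' Λ lam x hx m n h)).2

lemma yseg_head (m n : Fin k → ℕ) (h : m ≤ n) :
    (Λ.split (YY Λ lam x hx n) m (n - m) (dYY' Λ lam x hx m n h)).1 =
      YY Λ lam x hx m := by
  set S := Λ.split (YY Λ lam x hx n) m (n - m) (dYY' Λ lam x hx m n h) with hS
  obtain ⟨hs1, hs2, hs3, hs4⟩ :=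
    Λ.split_spec (YY Λ lam x hx n) m (n - m) (dYY' Λ lam x hx m n h)
  rw [← hS] at hs1 hs2 hs3 hs4
  obtain ⟨hy1, hy2, hy3, hy4⟩ := YR_spec Λ lam x hx n
  obtain ⟨hm1, hm2, hm3, hm4⟩ := YR_spec Λ lam x hx m
  have hsT : Λ.s S.2 = Λ.r (RRR Λ lam x hx n) := by
    rw [← hy1, ← hs4, Λ.s_comp _ _ hs1]
  have dZn : Λ.d (ZZ Λ lam x n) = m + ((n - m) + Λ.d lam) := by
    rw [dZZ Λ lam x hx]
    funext i
    have h2 : m i ≤ n i := h i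
    simp only [Pi.add_apply, Pi.sub_apply]
    omega
  have fact1 : Λ.comp S.1 (Λ.comp S.2 (RRR Λ lam x hx n)) = ZZ Λ lam x n := by
    rw [← Λ.comp_assoc _ _ _ hs1 hsT, hs4, hy4]
  have hsRm : Λ.s (RRR Λ lam x hx m) = Λ.r (x.seg m n h) := by
    rw [← Λ.s_comp _ _ hm1, hm4]
    exact sZZ_r Λ lam x hx m n h
  have fact2 : Λ.comp (YY Λ lam x hx m) (Λ.comp (RRR Λ lam x hx m) (x.seg m n h)) =
      ZZ Λ lam x n := by
    rw [← Λ.comp_assoc _ _ _ hm1 hsRm, hm4, comp_ZZ Λ lam x hx m n h]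
  have u1 := Λ.split_unique (ZZ Λ lam x n) m ((n - m) + Λ.d lam) dZn
    (a := S.1) (b := Λ.comp S.2 (RRR Λ lam x hx n))
    (by rw [Λ.r_comp _ _ hsT]; exact hs1) hs2
    (by rw [Λ.d_comp _ _ hsT, hs3, hy3]) fact1
  have u2 := Λ.split_unique (ZZ Λ lam x n) m ((n - m) + Λ.d lam) dZn
    (a := YY Λ lam x hx m) (b := Λ.comp (RRR Λ lam x hx m) (x.seg m n h))
    (by rw [Λ.r_comp _ _ hsRm]; exact hm1) hm2
    (by rw [Λ.d_comp _ _ hsRm, hm3, x.d_seg]; funext i;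
        have h2 : m i ≤ n i := h i
        simp only [Pi.add_apply, Pi.sub_apply]; omega)
    fact2
  exact (Prod.ext_iff.mp (u1.symm.trans u2)).1

lemma yseg_spec (m n : Fin k → ℕ) (h : m ≤ n) :
    Λ.s (YY Λ lam x hx m) = Λ.r (yseg Λ lam x hx m n h) ∧
      Λ.d (yseg Λ lam x hx m n h) = n - m ∧
      Λ.comp (YY Λ lam x hx m) (yseg Λ lam x hx m n h) = YY Λ lam x hx n := by
  obtain ⟨h1, h2, h3, h4⟩ :=
    Λ.split_spec (YY Λ lam x hx n) m (n - m) (dYY' Λ lam x hx m n h)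
  rw [yseg_head Λ lam x hx m n h] at h1 h4
  exact ⟨h1, h3, h4⟩

lemma yseg_src (m n p : Fin k → ℕ) (h₁ : m ≤ n) (h₂ : n ≤ p) :
    Λ.s (yseg Λ lam x hx m n h₁) = Λ.r (yseg Λ lam x hx n p h₂) :=
  calc Λ.s (yseg Λ lam x hx m n h₁)
      = Λ.s (Λ.comp (YY Λ lam x hx m) (yseg Λ lam x hx m n h₁)) :=
        (Λ.s_comp _ _ (yseg_spec Λ lam x hx m n h₁).1).symm
    _ = Λ.s (YY Λ lam x hx n) := by rw [(yseg_spec Λ lam x hx m n h₁).2.2]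
    _ = Λ.r (yseg Λ lam x hx n p h₂) := (yseg_spec Λ lam x hx n p h₂).1

lemma yseg_self (m : Fin k → ℕ) :
    yseg Λ lam x hx m m le_rfl =
      Λ.vert (Λ.r (yseg Λ lam x hx m m le_rfl)) := by
  have h0 : yseg Λ lam x hx m m le_rfl = Λ.vert (Λ.s (YY Λ lam x hx m)) := by
    have u := Λ.split_unique (YY Λ lam x hx m) m (m - m)
      (dYY' Λ lam x hx m m le_rfl)
      (a := YY Λ lam x hx m) (b := Λ.vert (Λ.s (YY Λ lam x hx m)))
      (by rw [Λ.r_vert]) (YR_spec Λ lam x hx m).2.1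
      (by rw [Λ.d_vert]; funext i; simp only [Pi.sub_apply, Pi.zero_apply]; omega)
      (Λ.comp_vert _)
    exact congrArg Prod.snd u
  rw [h0, Λ.r_vert]

lemma yseg_comp (m n p : Fin k → ℕ) (h₁ : m ≤ n) (h₂ : n ≤ p) :
    Λ.comp (yseg Λ lam x hx m n h₁) (yseg Λ lam x hx n p h₂) =
      yseg Λ lam x hx m p (h₁.trans h₂) := by
  have u := Λ.split_unique (YY Λ lam x hx p) m (p - m)
    (dYY' Λ lam x hx m p (h₁.trans h₂))
    (a := YY Λ lam x hx m)
    (b := Λ.comp (yseg Λ lam x hx m n h₁) (yseg Λ lam x hx n p h₂))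
    (by rw [Λ.r_comp _ _ (yseg_src Λ lam x hx m n p h₁ h₂)]
        exact (yseg_spec Λ lam x hx m n h₁).1)
    (YR_spec Λ lam x hx m).2.1
    (by rw [Λ.d_comp _ _ (yseg_src Λ lam x hx m n p h₁ h₂),
          (yseg_spec Λ lam x hx m n h₁).2.1, (yseg_spec Λ lam x hx n p h₂).2.1]
        funext i
        have e1 : m i ≤ n i := h₁ i
        have e2 : n i ≤ p i := h₂ i
        simp only [Pi.add_apply, Pi.sub_apply]
        omega)
    (by rw [← Λ.comp_assoc _ _ _ (yseg_spec Λ lam x hx m n h₁).1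
          (yseg_src Λ lam x hx m n p h₁ h₂), (yseg_spec Λ lam x hx m n h₁).2.2,
          (yseg_spec Λ lam x hx n p h₂).2.2])
  exact (congrArg Prod.snd u).symm

/-- The infinite path `λ · x`. -/
noncomputable def ypath : InfPath Λ where
  seg := yseg Λ lam x hx
  d_seg := fun m n h => (yseg_spec Λ lam x hx m n h).2.1
  src := yseg_src Λ lam x hx
  seg_self := yseg_self Λ lam x hx
  comp_seg := yseg_comp Λ lam x hx

lemma YY_zero : YY Λ lam x hx 0 = Λ.vert (Λ.r (ZZ Λ lam x 0)) := by
  have u := Λ.split_unique (ZZ Λ lam x 0) 0 (Λ.d lam) (dZZ Λ lam x hx 0)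
    (a := Λ.vert (Λ.r (ZZ Λ lam x 0))) (b := ZZ Λ lam x 0)
    (by rw [Λ.s_vert]) (Λ.d_vert _)
    (by rw [dZZ Λ lam x hx]; funext i; simp)
    (Λ.vert_comp _)
  exact congrArg Prod.fst u

lemma ypath_range : (ypath Λ lam x hx).range = Λ.r lam := by
  show Λ.r (yseg Λ lam x hx 0 0 le_rfl) = Λ.r lam
  rw [← (yseg_spec Λ lam x hx 0 0 le_rfl).1, YY_zero Λ lam x hx, Λ.s_vert,
    ZZ, Λ.r_comp _ _ (hsr Λ lam x hx 0 _)]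

lemma ypath_shift : (ypath Λ lam x hx).shift (Λ.d lam) = x := by
  apply InfPath.ext'
  funext m n h
  have hle : m + Λ.d lam ≤ n + Λ.d lam := add_le_add h le_rfl
  show yseg Λ lam x hx (m + Λ.d lam) (n + Λ.d lam) hle = x.seg m n h
  have hcomp : Λ.comp (ZZ Λ lam x m) (x.seg m n h) = YY Λ lam x hx (n + Λ.d lam) := by
    rw [YY_add Λ lam x hx n]
    exact comp_ZZ Λ lam x hx m n h
  have u := Λ.split_unique (YY Λ lam x hx (n + Λ.d lam)) (m + Λ.d lam)
    ((n + Λ.d lam) - (m + Λ.d lam))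
    (dYY' Λ lam x hx (m + Λ.d lam) (n + Λ.d lam) hle)
    (a := ZZ Λ lam x m) (b := x.seg m n h)
    (sZZ_r Λ lam x hx m n h) (dZZ Λ lam x hx m)
    (by rw [x.d_seg]; funext i; simp only [Pi.add_apply, Pi.sub_apply]; omega)
    hcomp
  have u2 := Λ.split_unique (YY Λ lam x hx (n + Λ.d lam)) (m + Λ.d lam)
    ((n + Λ.d lam) - (m + Λ.d lam))
    (dYY' Λ lam x hx (m + Λ.d lam) (n + Λ.d lam) hle)
    (a := YY Λ lam x hx (m + Λ.d lam)) (b := yseg Λ lam x hx _ _ hle)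
    (yseg_spec Λ lam x hx _ _ hle).1 (YR_spec Λ lam x hx _).2.1
    (yseg_spec Λ lam x hx _ _ hle).2.1 (yseg_spec Λ lam x hx _ _ hle).2.2
  have := congrArg Prod.snd (u2.symm.trans u)
  exact this

end Construction

/-- In a row-finite `k`-graph with no sources, `Σ_{r(λ)} ⊆ Σ_{s(λ)}` for every
morphism `λ`. -/
theorem stmt9 (k : ℕ) (V E : Type) [Countable E] (Λ : PGraphStr (Fin k → ℕ) V E)
    (hrf : RowFiniteNoSources Λ) (lam : E) :
    SigmaV Λ (Λ.r lam) ⊆ SigmaV Λ (Λ.s lam) := by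
  rintro ⟨p, q⟩ hpq x hx
  set y := ypath Λ lam x hx with hy
  have h1 : y.shift p = y.shift q := hpq y (ypath_range Λ lam x hx)
  have hxy : y.shift (Λ.d lam) = x := ypath_shift Λ lam x hx
  calc x.shift p = (y.shift (Λ.d lam)).shift p := by rw [hxy]
    _ = y.shift (p + Λ.d lam) := y.shift_shift _ _
    _ = y.shift (Λ.d lam + p) := by rw [add_comm]
    _ = (y.shift p).shift (Λ.d lam) := (y.shift_shift _ _).symm
    _ = (y.shift q).shift (Λ.d lam) := by rw [h1]
    _ = y.shift (Λ.d lam + q) := y.shift_shift _ _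
    _ = y.shift (q + Λ.d lam) := by rw [add_comm]
    _ = (y.shift (Λ.d lam)).shift q := (y.shift_shift _ _).symm
    _ = x.shift q := by rw [hxy]
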